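/- arXiv:2406.06831 — 2 statements merged into one kernel-verified Lean document; each statement's English description precedes it below -/
import Mathlib

section
/- Let v : ℝ → ℝ be twice continuously differentiable, 2π-periodic and everywhere positive, and define G : ℝ² → ℝ by G(w) = r²/v(θ)² whenever w = r·(cos θ, sin θ) with r > 0 (and G(0) = 0). Then the fundamental tensor g_w(u₁,u₂) := (1/2)·∂²/∂s∂t [G(w + s·u₁ + t·u₂)]|_{s=t=0} is a positive definite bilinear form on ℝ² for every w ≠ 0 if and only if 2·v'(θ)² − v(θ)·v''(θ) + v(θ)² > 0 for all θ ∈ ℝ. In other words, v generates a Minkowski norm F(w) = r/v(θ) in polar coordinates exactly under this condition. -/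
/-- The fundamental tensor of `G = F²` at `w`, evaluated on `u₁, u₂`:
`g_w(u₁,u₂) = (1/2) ∂²/∂s∂t [G(w + s u₁ + t u₂)] |_{s=t=0}`. -/
noncomputable def fundTensor (G : ℝ × ℝ → ℝ) (w u₁ u₂ : ℝ × ℝ) : ℝ :=
  (1 / 2) * deriv (fun s : ℝ => deriv (fun t : ℝ => G (w + s • u₁ + t • u₂)) 0) 0

/-! Write `G = r² h(θ)` with `h = v⁻²`, and `w = R_θ (r, 0)`, `u = R_θ (α, β)` for the rotation
`R_θ`. Near `τ = 0` the line `w + τ u` has polar coordinates `(√P, Θ)` with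
`P = (r + τα)² + (τβ)²` and `Θ = θ + arctan (τβ / (r + τα))`; differentiating `P · h(Θ)` twice
gives `g_w(u, u) = (α² + β²) h + αβ h' + β² h'' / 2 = ((αv − βv')² + β² (2v'² − v v'' + v²)) / v⁴`.
This quadratic form in `(α, β)` is positive definite iff the coefficient `2v'² − v v'' + v²`
is positive, as one sees at `(α, β) = (v', v)`. -/

open Real Filter Topology

noncomputable def planeRotation (θ : ℝ) (p : ℝ × ℝ) : ℝ × ℝ :=
  (p.1 * cos θ - p.2 * sin θ, p.1 * sin θ + p.2 * cos θ)

@[simp]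
lemma planeRotation_zero_angle (p : ℝ × ℝ) : planeRotation 0 p = p := by
  simp [planeRotation]

lemma planeRotation_planeRotation (θ φ : ℝ) (p : ℝ × ℝ) :
    planeRotation θ (planeRotation φ p) = planeRotation (θ + φ) p := by
  simp only [planeRotation, cos_add, sin_add, Prod.mk.injEq]
  constructor <;> ring

lemma planeRotation_add_smul (θ τ : ℝ) (p q : ℝ × ℝ) :
    planeRotation θ p + τ • planeRotation θ q = planeRotation θ (p + τ • q) := by
  simp only [planeRotation, Prod.fst_add, Prod.snd_add, Prod.smul_fst, Prod.smul_snd,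
    smul_eq_mul, Prod.mk_add_mk, Prod.smul_mk, Prod.mk.injEq]
  constructor <;> ring

lemma planeRotation_eq_zero_iff {θ : ℝ} {p : ℝ × ℝ} : planeRotation θ p = 0 ↔ p = 0 := by
  constructor
  · intro h
    have := congrArg (planeRotation (-θ)) h
    rwa [planeRotation_planeRotation, neg_add_cancel, planeRotation_zero_angle,
      show planeRotation (-θ) 0 = 0 by simp [planeRotation]] at this
  · rintro rfl
    simp [planeRotation]

lemma exists_planeRotation_eq {w : ℝ × ℝ} (hw : w ≠ 0) :
    ∃ r θ : ℝ, 0 < r ∧ planeRotation θ (r, 0) = w := by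
  set z : ℂ := ⟨w.1, w.2⟩
  refine ⟨‖z‖, z.arg, norm_pos_iff.2 fun hz => hw ?_, ?_⟩
  · simpa [z, Complex.ext_iff, Prod.ext_iff] using hz
  · simp [planeRotation, Complex.norm_mul_cos_arg, Complex.norm_mul_sin_arg, z]

lemma eq_planeRotation_arctan {X : ℝ} (hX : 0 < X) (Y : ℝ) :
    (X, Y) = planeRotation (arctan (Y / X)) (√(X ^ 2 + Y ^ 2), 0) := by
  have hsq : √(1 + (Y / X) ^ 2) = √(X ^ 2 + Y ^ 2) / X := by
    rw [show 1 + (Y / X) ^ 2 = (X ^ 2 + Y ^ 2) / X ^ 2 by field_simp,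
      sqrt_div (by positivity), sqrt_sq hX.le]
  have : 0 < √(X ^ 2 + Y ^ 2) := by positivity
  simp only [planeRotation, cos_arctan, sin_arctan, hsq, Prod.mk.injEq]
  constructor <;> field_simp <;> ring

lemma fundTensor_self (G : ℝ × ℝ → ℝ) (w u : ℝ × ℝ) :
    fundTensor G w u u = 1 / 2 * deriv (deriv fun τ : ℝ => G (w + τ • u)) 0 := by
  have h : ∀ s : ℝ, deriv (fun t : ℝ => G (w + s • u + t • u)) 0
      = deriv (fun τ : ℝ => G (w + τ • u)) s := fun s => by
    simpa [add_smul, add_assoc, add_comm] using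
      deriv_comp_const_add (fun τ => G (w + τ • u)) s 0
  simp only [fundTensor, h]

lemma HasDerivAt.arctan_div {x y : ℝ → ℝ} {x' y' t : ℝ} (hx : HasDerivAt x x' t)
    (hy : HasDerivAt y y' t) (h : x t ≠ 0) :
    HasDerivAt (fun s => Real.arctan (y s / x s))
      ((x t * y' - y t * x') / (x t ^ 2 + y t ^ 2)) t := by
  refine (hy.div hx h).arctan.congr_deriv ?_
  simp only [Pi.div_apply]
  field_simp

theorem fundTensor_planeRotation {G : ℝ × ℝ → ℝ} {h : ℝ → ℝ}
    (hh : Differentiable ℝ h) (hh' : Differentiable ℝ (deriv h))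
    (hG : ∀ r θ : ℝ, 0 < r → G (planeRotation θ (r, 0)) = r ^ 2 * h θ)
    {r : ℝ} (hr : 0 < r) (θ α β : ℝ) :
    fundTensor G (planeRotation θ (r, 0)) (planeRotation θ (α, β)) (planeRotation θ (α, β)) =
      (α ^ 2 + β ^ 2) * h θ + α * β * deriv h θ + β ^ 2 * deriv (deriv h) θ / 2 := by
  set X : ℝ → ℝ := fun τ => r + τ * α
  set Y : ℝ → ℝ := fun τ => τ * β
  set P : ℝ → ℝ := fun τ => X τ ^ 2 + Y τ ^ 2
  set Θ : ℝ → ℝ := fun τ => θ + arctan (Y τ / X τ)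
  have hX : ∀ τ, HasDerivAt X α τ := fun τ =>
    (((hasDerivAt_id' τ).mul_const α).const_add r).congr_deriv (one_mul α)
  have hY : ∀ τ, HasDerivAt Y β τ := fun τ =>
    ((hasDerivAt_id' τ).mul_const β).congr_deriv (one_mul β)
  have hP : ∀ τ, HasDerivAt P (2 * X τ * α + 2 * Y τ * β) τ := fun τ =>
    ((hX τ).pow 2).add ((hY τ).pow 2) |>.congr_deriv (by ring)
  have hΘ : ∀ τ, 0 < X τ → HasDerivAt Θ (r * β / P τ) τ := fun τ hτ => by
    refine ((hX τ).arctan_div (hY τ) hτ.ne').const_add θ |>.congr_deriv ?_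
    simp only [X, Y, P]
    ring
  have hnear : ∀ᶠ τ in 𝓝 0, 0 < X τ :=
    (hX 0).continuousAt.eventually (lt_mem_nhds (by simpa [X] using hr))
  have hline : (fun τ : ℝ => G (planeRotation θ (r, 0) + τ • planeRotation θ (α, β)))
      =ᶠ[𝓝 0] fun τ => P τ * h (Θ τ) := by
    filter_upwards [hnear] with τ hτ
    have hXY : (r, 0) + τ • (α, β) = (X τ, Y τ) := by simp [X, Y]
    rw [planeRotation_add_smul, hXY, eq_planeRotation_arctan hτ, planeRotation_planeRotation,
      hG _ _ (by positivity), sq_sqrt (by positivity)]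
  -- `P Θ' = r β` is constant, which keeps `Θ''` out of the second derivative
  have hline_deriv : deriv (fun τ => P τ * h (Θ τ)) =ᶠ[𝓝 0]
      fun τ => (2 * X τ * α + 2 * Y τ * β) * h (Θ τ) + r * β * deriv h (Θ τ) := by
    filter_upwards [hnear] with τ hτ
    have hPpos : 0 < P τ := by positivity
    refine ((hP τ).mul ((hh _).hasDerivAt.comp τ (hΘ τ hτ))).deriv.trans ?_
    simp only [Function.comp_apply]
    field_simp
  have hΘ0 : HasDerivAt Θ (β / r) 0 := by
    convert hΘ 0 (by simpa [X] using hr) using 1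
    simp [X, Y, P]
    field_simp
  have hline_deriv_deriv : HasDerivAt
      (fun τ => (2 * X τ * α + 2 * Y τ * β) * h (Θ τ) + r * β * deriv h (Θ τ))
      ((2 * α * α + 2 * β * β) * h (Θ 0)
        + (2 * X 0 * α + 2 * Y 0 * β) * (deriv h (Θ 0) * (β / r))
        + r * β * (deriv (deriv h) (Θ 0) * (β / r))) 0 :=
    ((((hX 0).const_mul 2).mul_const α).add (((hY 0).const_mul 2).mul_const β)
      |>.mul ((hh _).hasDerivAt.comp 0 hΘ0)).add
      (((hh' _).hasDerivAt.comp 0 hΘ0).const_mul (r * β))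
  rw [fundTensor_self, hline.deriv.deriv_eq, hline_deriv.deriv_eq,
    hline_deriv_deriv.deriv]
  simp only [X, Y, Θ, zero_mul, zero_div, arctan_zero, add_zero]
  field_simp
  ring

lemma deriv_inv_sq {v : ℝ → ℝ} (hv : Differentiable ℝ v) (hne : ∀ θ, v θ ≠ 0) :
    deriv (fun θ => (v θ ^ 2)⁻¹) = fun θ => -2 * deriv v θ / v θ ^ 3 := by
  funext θ
  refine (((hv θ).hasDerivAt.pow 2).inv (pow_ne_zero 2 (hne θ))).deriv.trans ?_
  have := hne θ
  simp only [Pi.pow_apply]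
  field_simp
  ring

theorem fundTensor_planeRotation_of_inv_sq {v : ℝ → ℝ} (hv : ContDiff ℝ 2 v)
    (hne : ∀ θ, v θ ≠ 0) {G : ℝ × ℝ → ℝ}
    (hG : ∀ r θ : ℝ, 0 < r → G (r * cos θ, r * sin θ) = r ^ 2 / v θ ^ 2)
    {r : ℝ} (hr : 0 < r) (θ α β : ℝ) :
    fundTensor G (planeRotation θ (r, 0)) (planeRotation θ (α, β)) (planeRotation θ (α, β)) =
      ((α * v θ - β * deriv v θ) ^ 2
        + β ^ 2 * (2 * deriv v θ ^ 2 - v θ * deriv (deriv v) θ + v θ ^ 2)) / v θ ^ 4 := by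
  have hv₁ : Differentiable ℝ v := hv.differentiable two_ne_zero
  have hv₂ : Differentiable ℝ (deriv v) := hv.differentiable_deriv_two
  have hh : Differentiable ℝ fun θ => (v θ ^ 2)⁻¹ := fun θ =>
    ((hv₁ θ).pow 2).inv (pow_ne_zero 2 (hne θ))
  have hh' : Differentiable ℝ (deriv fun θ => (v θ ^ 2)⁻¹) := by
    rw [deriv_inv_sq hv₁ hne]
    exact (hv₂.const_mul _).div (hv₁.pow 3) fun θ => pow_ne_zero 3 (hne θ)
  have hh'' : deriv (fun θ => -2 * deriv v θ / v θ ^ 3) θ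
      = (6 * deriv v θ ^ 2 - 2 * v θ * deriv (deriv v) θ) / v θ ^ 4 := by
    refine (((hv₂ θ).hasDerivAt.const_mul (-2)).div ((hv₁ θ).hasDerivAt.pow 3)
      (pow_ne_zero 3 (hne θ))).deriv.trans ?_
    have := hne θ
    simp only [Pi.pow_apply]
    field_simp
    ring
  rw [fundTensor_planeRotation hh hh' (fun r θ hr => by
      simpa [planeRotation, div_eq_mul_inv] using hG r θ hr) hr, deriv_inv_sq hv₁ hne, hh'']
  have := hne θ
  field_simp
  ring

lemma forall_sq_sub_add_sq_mul_pos_iff {a b K : ℝ} (ha : a ≠ 0) :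
    (∀ p : ℝ × ℝ, p ≠ 0 → 0 < (p.1 * a - p.2 * b) ^ 2 + p.2 ^ 2 * K) ↔ 0 < K := by
  constructor
  · intro H
    have h := H (b, a) (by simp [ha])
    rw [show b * a - a * b = 0 by ring, zero_pow two_ne_zero, zero_add] at h
    exact pos_of_mul_pos_right h (sq_nonneg a)
  · rintro hK ⟨α, β⟩ hp
    rcases eq_or_ne β 0 with rfl | hβ
    · have hα : α ≠ 0 := fun hα => hp (by simp [hα])
      have := mul_ne_zero hα ha
      simpa using (by positivity : 0 < (α * a) ^ 2)
    · positivity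

theorem fundTensor_posDef_iff_strong_convexity_general
    (v : ℝ → ℝ) (hv : ContDiff ℝ 2 v)
    (hpos : ∀ θ, 0 < v θ) (G : ℝ × ℝ → ℝ)
    (hG : ∀ r θ : ℝ, 0 < r → G (r * Real.cos θ, r * Real.sin θ) = r ^ 2 / (v θ) ^ 2) :
    (∀ w : ℝ × ℝ, w ≠ 0 → ∀ u : ℝ × ℝ, u ≠ 0 → 0 < fundTensor G w u u) ↔
      ∀ θ : ℝ, 0 < 2 * (deriv v θ) ^ 2 - v θ * deriv (deriv v) θ + (v θ) ^ 2 := by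
  have hne : ∀ θ, v θ ≠ 0 := fun θ => (hpos θ).ne'
  constructor
  · intro H θ
    refine (forall_sq_sub_add_sq_mul_pos_iff (b := deriv v θ) (hne θ)).1 fun ⟨α, β⟩ hp => ?_
    have h := H (planeRotation θ (1, 0)) (planeRotation_eq_zero_iff.not.2 (by simp))
      (planeRotation θ (α, β)) (planeRotation_eq_zero_iff.not.2 hp)
    rw [fundTensor_planeRotation_of_inv_sq hv hne hG (r := 1) one_pos] at h
    exact (div_pos_iff_of_pos_right (pow_pos (hpos θ) 4)).1 h
  · intro H w hw u hu
    obtain ⟨r, θ, hr, rfl⟩ := exists_planeRotation_eq hw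
    obtain ⟨⟨α, β⟩, rfl⟩ : ∃ p, planeRotation θ p = u := ⟨planeRotation (-θ) u, by
      rw [planeRotation_planeRotation, add_neg_cancel, planeRotation_zero_angle]⟩
    rw [fundTensor_planeRotation_of_inv_sq hv hne hG hr]
    exact div_pos ((forall_sq_sub_add_sq_mul_pos_iff (hne θ)).2 (H θ) _
      (planeRotation_eq_zero_iff.not.1 hu)) (pow_pos (hpos θ) 4)

/-- The fundamental tensor `g_w` is positive definite for every
`w ≠ 0` if and only if `2 v'(θ)² − v(θ) v''(θ) + v(θ)² > 0` for all `θ`, i.e. `v`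
generates a Minkowski norm exactly under the strong convexity condition. -/
theorem fundTensor_posDef_iff_strong_convexity
    (v : ℝ → ℝ) (hv : ContDiff ℝ 2 v) (hper : ∀ θ, v (θ + 2 * Real.pi) = v θ)
    (hpos : ∀ θ, 0 < v θ) (G : ℝ × ℝ → ℝ)
    (hG : ∀ r θ : ℝ, 0 < r → G (r * Real.cos θ, r * Real.sin θ) = r ^ 2 / (v θ) ^ 2)
    (hG0 : G 0 = 0) :
    (∀ w : ℝ × ℝ, w ≠ 0 → ∀ u : ℝ × ℝ, u ≠ 0 → 0 < fundTensor G w u u) ↔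
      ∀ θ : ℝ, 0 < 2 * (deriv v θ) ^ 2 - v θ * deriv (deriv v) θ + (v θ) ^ 2 :=
  fundTensor_posDef_iff_strong_convexity_general v hv hpos G hG
end

section
/- Let a, b ∈ ℝ with a ≠ 0 and b ≠ 0, h(φ) = |cos φ|³/|a|³ + sin²φ/b², and u(θ) = √(h(θ/2)). Then u''(θ) + u(θ) > 0 for every θ ∈ ℝ. Consequently, the figure defined in polar coordinates by Gielis superformula with parameters m = 2, n₁ = 2, n₂ = 3, n₃ = 2 (i.e. the curve r = v(θ) with v = 1/u) is strongly convex for all a, b ∈ ℝ∖{0}. -/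
/-!
Put `g θ = h (θ / 2)`. For `u = √g` one has
`u'' + u = (2 g g'' - g'² + 4 g²) / (4 g √g)`, and since `g' = h'/2`, `g'' = h''/4` the
numerator is `(2 h h'' - h'² + 16 h²) / 4` at `θ / 2`. With `x = |cos φ| ∈ [0, 1]`,
`α = |a|⁻³`, `β = b⁻²` this is the quadratic form
`(3x⁴ + 7x⁶) α² + 2x (6 + 5x² - 9x⁴) αβ + 12 (1 - x²)² β²`, whose coefficients are nonnegative
and whose outer coefficients never vanish together. For `v = 1 / u` the identity
`2 v'² - v v'' + v² = (u'' + u) / u³` transfers the bound to `v`.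
The only nonsmooth ingredient, `|cos φ|³`, is twice differentiable because `y ↦ y |y|` has
derivative `2 |y|`.
-/

open Real Filter Topology

theorem hasDerivAt_mul_abs (x : ℝ) : HasDerivAt (fun y : ℝ => y * |y|) (2 * |x|) x := by
  rcases lt_trichotomy x 0 with hx | rfl | hx
  · exact ((hasDerivAt_id' x).mul (hasDerivAt_abs_neg hx)).congr_deriv
      (by rw [abs_of_neg hx]; ring)
  · rw [hasDerivAt_iff_tendsto_slope_zero]
    have hslope : ∀ t : ℝ, t ≠ 0 → t⁻¹ • ((0 + t) * |0 + t| - 0 * |0|) = |t| := by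
      intro t ht
      simp [smul_eq_mul, ← mul_assoc, inv_mul_cancel₀ ht]
    have hlim : Tendsto (fun t : ℝ => |t|) (𝓝[≠] 0) (𝓝 (2 * |(0 : ℝ)|)) := by
      simpa using (continuous_abs.tendsto (0 : ℝ)).mono_left nhdsWithin_le_nhds
    exact hlim.congr' (eventually_nhdsWithin_of_forall fun t ht => (hslope t ht).symm)
  · exact ((hasDerivAt_id' x).mul (hasDerivAt_abs_pos hx)).congr_deriv
      (by rw [abs_of_pos hx]; ring)

theorem hasDerivAt_abs_pow_three (x : ℝ) :
    HasDerivAt (fun y : ℝ => |y| ^ 3) (3 * (x * |x|)) x := by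
  have hcube : (fun y : ℝ => |y| ^ 3) = fun y => y * (y * |y|) := by
    ext y
    rw [← mul_assoc, ← sq, ← sq_abs y]
    ring
  rw [hcube]
  exact ((hasDerivAt_id' x).mul (hasDerivAt_mul_abs x)).congr_deriv (by ring)

theorem HasDerivAt.comp_div_const {f : ℝ → ℝ} {f' x : ℝ} (c : ℝ)
    (hf : HasDerivAt f f' (x / c)) :
    HasDerivAt (fun y => f (y / c)) (f' / c) x :=
  hf.comp x ((hasDerivAt_id' x).div_const c) |>.congr_deriv (mul_one_div f' c)

theorem deriv_deriv_eq_of_hasDerivAt {u u' u'' : ℝ → ℝ} (hu : ∀ x, HasDerivAt u (u' x) x)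
    (hu' : ∀ x, HasDerivAt u' (u'' x) x) : deriv (deriv u) = u'' := by
  rw [funext fun x => (hu x).deriv]
  exact funext fun x => (hu' x).deriv

section SqrtDeriv

variable {g g' g'' : ℝ → ℝ}

theorem hasDerivAt_sqrt_comp (hg : ∀ x, HasDerivAt g (g' x) x) (hpos : ∀ x, 0 < g x) (x : ℝ) :
    HasDerivAt (fun y => √(g y)) (g' x / (2 * √(g x))) x :=
  (hg x).sqrt (hpos x).ne'

theorem hasDerivAt_deriv_sqrt_comp (hg : ∀ x, HasDerivAt g (g' x) x)
    (hg' : ∀ x, HasDerivAt g' (g'' x) x) (hpos : ∀ x, 0 < g x) (x : ℝ) :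
    HasDerivAt (fun y => g' y / (2 * √(g y)))
      ((2 * g x * g'' x - g' x ^ 2) / (4 * g x * √(g x))) x := by
  have hs : 0 < √(g x) := sqrt_pos.2 (hpos x)
  have hden := (hasDerivAt_sqrt_comp hg hpos x).const_mul 2
  refine ((hg' x).div hden (by positivity)).congr_deriv ?_
  have hsq : g x = √(g x) ^ 2 := (sq_sqrt (hpos x).le).symm
  set s := √(g x)
  rw [hsq]
  field_simp
  ring

theorem deriv_deriv_sqrt_comp_add_pos (hg : ∀ x, HasDerivAt g (g' x) x)
    (hg' : ∀ x, HasDerivAt g' (g'' x) x) (hpos : ∀ x, 0 < g x) {x : ℝ}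
    (hkey : 0 < 2 * g x * g'' x - g' x ^ 2 + 4 * g x ^ 2) :
    0 < deriv (deriv fun y => √(g y)) x + √(g x) := by
  rw [deriv_deriv_eq_of_hasDerivAt (hasDerivAt_sqrt_comp hg hpos)
    (hasDerivAt_deriv_sqrt_comp hg hg' hpos)]
  have hs : 0 < √(g x) := sqrt_pos.2 (hpos x)
  have hsum : (2 * g x * g'' x - g' x ^ 2) / (4 * g x * √(g x)) + √(g x)
      = (2 * g x * g'' x - g' x ^ 2 + 4 * g x ^ 2) / (4 * g x * √(g x)) := by
    have hsq : g x = √(g x) ^ 2 := (sq_sqrt (hpos x).le).symm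
    set s := √(g x)
    rw [hsq]
    field_simp
  rw [hsum]
  exact div_pos hkey (by have := hpos x; positivity)

end SqrtDeriv

theorem two_mul_deriv_one_div_sq_sub_add_sq_eq {u u' u'' : ℝ → ℝ}
    (hu : ∀ x, HasDerivAt u (u' x) x) (hu' : ∀ x, HasDerivAt u' (u'' x) x)
    (hne : ∀ x, u x ≠ 0) (x : ℝ) :
    2 * deriv (fun y => 1 / u y) x ^ 2 - 1 / u x * deriv (deriv fun y => 1 / u y) x
      + (1 / u x) ^ 2 = (deriv (deriv u) x + u x) / u x ^ 3 := by
  have hv : ∀ y, HasDerivAt (fun y => 1 / u y) (-u' y / u y ^ 2) y := fun y => by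
    simpa only [one_div] using (hu y).fun_inv (hne y)
  have hv' : HasDerivAt (fun y => -u' y / u y ^ 2)
      ((-u'' x * u x ^ 2 - -u' x * (2 * u x * u' x)) / (u x ^ 2) ^ 2) x := by
    simpa using (hu' x).fun_neg.fun_div ((hu x).fun_pow 2) (pow_ne_zero 2 (hne x))
  rw [funext fun y => (hv y).deriv, hv'.deriv, deriv_deriv_eq_of_hasDerivAt hu hu']
  have := hne x
  field_simp
  ring

namespace Gielis

variable (α β : ℝ)

noncomputable def h (φ : ℝ) : ℝ := α * |cos φ| ^ 3 + β * sin φ ^ 2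

noncomputable def h' (φ : ℝ) : ℝ :=
  2 * β * (sin φ * cos φ) - 3 * α * (cos φ * |cos φ| * sin φ)

noncomputable def h'' (φ : ℝ) : ℝ :=
  α * (6 * |cos φ| * sin φ ^ 2 - 3 * cos φ ^ 2 * |cos φ|) + 2 * β * (cos φ ^ 2 - sin φ ^ 2)

theorem hasDerivAt_h (φ : ℝ) : HasDerivAt (h α β) (h' α β φ) φ := by
  have hcos := (hasDerivAt_abs_pow_three (cos φ)).comp φ (hasDerivAt_cos φ)
  have hsin := (hasDerivAt_sin φ).fun_pow 2
  refine ((hcos.const_mul α).fun_add (hsin.const_mul β)).congr_deriv ?_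
  simp only [h']
  ring

theorem hasDerivAt_h' (φ : ℝ) : HasDerivAt (h' α β) (h'' α β φ) φ := by
  have hsc := (hasDerivAt_sin φ).fun_mul (hasDerivAt_cos φ)
  have hcos :=
    ((hasDerivAt_mul_abs (cos φ)).comp φ (hasDerivAt_cos φ)).fun_mul (hasDerivAt_sin φ)
  refine ((hsc.const_mul (2 * β)).fun_sub (hcos.const_mul (3 * α))).congr_deriv ?_
  simp only [h'', Function.comp_apply]
  ring

variable {α β}

theorem h_pos (hα : 0 < α) (hβ : 0 < β) (φ : ℝ) : 0 < h α β φ := by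
  unfold h
  by_cases hc : cos φ = 0
  · have hs : sin φ ^ 2 = 1 := by simpa [hc] using sin_sq_add_cos_sq φ
    simp [hc, hs, hβ]
  · positivity

theorem two_mul_h_mul_h''_sub_sq_add_pos (hα : 0 < α) (hβ : 0 < β) (φ : ℝ) :
    0 < 2 * h α β φ * h'' α β φ - h' α β φ ^ 2 + 16 * h α β φ ^ 2 := by
  set x := |cos φ|
  have hc : cos φ ^ 2 = x ^ 2 := (sq_abs _).symm
  have hs : sin φ ^ 2 = 1 - x ^ 2 := by linarith [sin_sq_add_cos_sq φ]
  have hx0 : 0 ≤ x := abs_nonneg _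
  have hx1 : x ≤ 1 := abs_cos_le_one φ
  have hexpand : 2 * h α β φ * h'' α β φ - h' α β φ ^ 2 + 16 * h α β φ ^ 2
      = (3 * x ^ 4 + 7 * x ^ 6) * α ^ 2 + 2 * x * (6 + 5 * x ^ 2 - 9 * x ^ 4) * (α * β)
        + 12 * (1 - x ^ 2) ^ 2 * β ^ 2 := by
    have hsq : h' α β φ ^ 2 = (2 * β - 3 * α * x) ^ 2 * sin φ ^ 2 * cos φ ^ 2 := by
      unfold h'; ring
    rw [hsq]
    unfold h h''
    rw [hs, hc]
    ring
  have hmixed : 0 ≤ 2 * x * (6 + 5 * x ^ 2 - 9 * x ^ 4) * (α * β) := by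
    have : 0 ≤ 6 + 5 * x ^ 2 - 9 * x ^ 4 := by nlinarith [mul_le_one₀ hx1 hx0 hx1]
    positivity
  have hends : 0 < (3 * x ^ 4 + 7 * x ^ 6) * α ^ 2 + 12 * (1 - x ^ 2) ^ 2 * β ^ 2 := by
    rcases hx0.eq_or_lt with hx | hx
    · simp only [← hx]
      positivity
    · have : 0 ≤ 12 * (1 - x ^ 2) ^ 2 * β ^ 2 := by positivity
      have : 0 < (3 * x ^ 4 + 7 * x ^ 6) * α ^ 2 := by positivity
      linarith
  linarith

end Gielis

/-- With `h(φ) = |cos φ|³/|a|³ + sin²φ/b²` and `u(θ) = √(h(θ/2))`,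
one has `u''(θ) + u(θ) > 0` for every `θ`; consequently the Gielis figure
`r = v(θ)` with `v = 1/u` is strongly convex, i.e.
`2 v'(θ)² − v(θ) v''(θ) + v(θ)² > 0` for all `θ`, for all `a, b ∈ ℝ∖{0}`. -/
theorem gielis_strong_convexity (a b : ℝ) (ha : a ≠ 0) (hb : b ≠ 0)
    (h u v : ℝ → ℝ)
    (hh : ∀ φ, h φ = |Real.cos φ| ^ 3 / |a| ^ 3 + Real.sin φ ^ 2 / b ^ 2)
    (hu : ∀ θ, u θ = Real.sqrt (h (θ / 2)))
    (hv : ∀ θ, v θ = 1 / u θ) :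
    (∀ θ : ℝ, 0 < deriv (deriv u) θ + u θ) ∧
      ∀ θ : ℝ, 0 < 2 * (deriv v θ) ^ 2 - v θ * deriv (deriv v) θ + (v θ) ^ 2 := by
  set α := (|a| ^ 3)⁻¹
  set β := (b ^ 2)⁻¹
  have hα : 0 < α := by positivity
  have hβ : 0 < β := by positivity
  obtain rfl : u = fun θ => √(Gielis.h α β (θ / 2)) := by
    funext θ
    rw [hu, hh, Gielis.h, div_eq_inv_mul (|cos (θ / 2)| ^ 3), div_eq_inv_mul (sin (θ / 2) ^ 2)]
  obtain rfl : v = fun θ => 1 / √(Gielis.h α β (θ / 2)) := funext hv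
  have hg θ : HasDerivAt (fun θ => Gielis.h α β (θ / 2)) (Gielis.h' α β (θ / 2) / 2) θ :=
    (Gielis.hasDerivAt_h α β _).comp_div_const 2
  have hg' θ :
      HasDerivAt (fun θ => Gielis.h' α β (θ / 2) / 2) (Gielis.h'' α β (θ / 2) / 2 / 2) θ :=
    ((Gielis.hasDerivAt_h' α β _).comp_div_const 2).div_const 2
  have hpos θ : 0 < Gielis.h α β (θ / 2) := Gielis.h_pos hα hβ _
  have hconvex θ :
      0 < deriv (deriv fun θ => √(Gielis.h α β (θ / 2))) θ + √(Gielis.h α β (θ / 2)) :=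
    deriv_deriv_sqrt_comp_add_pos hg hg' hpos
      (by linarith [Gielis.two_mul_h_mul_h''_sub_sq_add_pos hα hβ (θ / 2)])
  refine ⟨hconvex, fun θ => ?_⟩
  rw [two_mul_deriv_one_div_sq_sub_add_sq_eq (hasDerivAt_sqrt_comp hg hpos)
    (hasDerivAt_deriv_sqrt_comp hg hg' hpos) (fun θ => (sqrt_pos.2 (hpos θ)).ne') θ]
  exact div_pos (hconvex θ) (pow_pos (sqrt_pos.2 (hpos θ)) 3)
end
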